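/- For every Hausdorff paratopological gyrogroup G, the Hausdorff number satisfies Hs(G) ≤ l(G), where l(G) is the Lindelöf number of G. -/

import Mathlib

/-!
Given a neighbourhood `U` of `0`, every `x ∉ int U` is not `0`, so by the Hausdorff property and
continuity of `(p, q) ↦ (x ⊕ p) ⊕ q` there is an open `V_x ∋ 0` with
`V_x ∩ ((x ⊕ V_x) ⊕ V_x) = ∅`. The right cancellation law `(a ⊟ b) ⊕ b = a` turns this into
`(V_x ⊟ V_x) ∩ (x ⊕ V_x) = ∅`. The open sets `x ⊕ V_x`, together with `int U`, cover `G`, so at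
most `l(G)` of them suffice, and the corresponding `V_x` form the family required by `Hs`.
-/

open Pointwise

/-- A gyrogroup: a groupoid with identity, inverses, gyroautomorphisms satisfying
the left gyroassociative law and the left loop property. -/
class Gyrogroup (G : Type*) extends Zero G, Neg G, Add G where
  zero_add : ∀ a : G, 0 + a = a
  add_zero : ∀ a : G, a + 0 = a
  neg_add_cancel : ∀ a : G, -a + a = 0
  add_neg_cancel : ∀ a : G, a + -a = 0
  gyr : G → G → G → G
  gyr_bijective : ∀ a b : G, Function.Bijective (gyr a b)
  gyr_add : ∀ a b x y : G, gyr a b (x + y) = gyr a b x + gyr a b y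
  gyrassoc : ∀ a b c : G, a + (b + c) = a + b + gyr a b c
  loop : ∀ a b : G, gyr (a + b) b = gyr a b

/-- The right cosubtraction a ⊟ b = a ⊕ gyr[a,b](⊖b). -/
def boxminus {G : Type*} [Gyrogroup G] (a b : G) : G := a + Gyrogroup.gyr a b (-b)

/-- The Hausdorff number: the minimum cardinal κ such that every neighborhood U of 0
admits a family γ of neighborhoods of 0 with |γ| ≤ κ and ⋂_{V∈γ}(V ⊟ V) ⊆ U. -/
noncomputable def Hs (G : Type*) [Gyrogroup G] [TopologicalSpace G] : Cardinal :=
  sInf {κ : Cardinal | ∀ U ∈ nhds (0 : G), ∃ γ : Set (Set G),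
    (∀ V ∈ γ, V ∈ nhds (0 : G)) ∧ Cardinal.mk γ ≤ κ ∧
      (⋂ V ∈ γ, Set.image2 boxminus V V) ⊆ U}

/-- The Lindelöf number of a space: the least infinite cardinal κ such that every open
cover has a subcover of cardinality at most κ. -/
noncomputable def LindelofNumber (X : Type*) [TopologicalSpace X] : Cardinal :=
  sInf {κ : Cardinal | Cardinal.aleph0 ≤ κ ∧ ∀ C : Set (Set X), (∀ U ∈ C, IsOpen U) →
    ⋃₀ C = Set.univ → ∃ D ⊆ C, Cardinal.mk D ≤ κ ∧ ⋃₀ D = Set.univ}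

namespace Gyrogroup

variable {G : Type*} [Gyrogroup G]

theorem add_left_injective (a : G) : Function.Injective (a + ·) := by
  intro x y (h : a + x = a + y)
  have neg_add_add : ∀ z : G, -a + (a + z) = gyr (-a) a z := fun z => by
    rw [gyrassoc, neg_add_cancel, zero_add]
  exact (gyr_bijective (-a) a).injective (by rw [← neg_add_add, ← neg_add_add, h])

theorem gyr_zero_left (b x : G) : gyr 0 b x = x := by
  have h := gyrassoc (0 : G) b x
  rw [zero_add, zero_add] at h
  exact (add_left_injective b h).symm

theorem gyr_neg_left_self (a x : G) : gyr (-a) a x = x := by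
  rw [← loop, neg_add_cancel, gyr_zero_left]

theorem neg_add_cancel_left (a x : G) : -a + (a + x) = x := by
  rw [gyrassoc, neg_add_cancel, zero_add, gyr_neg_left_self]

theorem neg_neg (a : G) : -(-a) = a :=
  add_left_injective (-a) (by simp only [add_neg_cancel, neg_add_cancel])

theorem add_neg_cancel_left (a x : G) : a + (-a + x) = x := by
  simpa only [neg_neg] using neg_add_cancel_left (-a) x

theorem eq_neg_of_add_eq_zero_right {a b : G} (h : a + b = 0) : b = -a := by
  rw [← neg_add_cancel_left a b, h, add_zero]

theorem gyr_eq (a b x : G) : gyr a b x = -(a + b) + (a + (b + x)) := by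
  rw [gyrassoc a b x, neg_add_cancel_left]

theorem gyr_zero (a b : G) : gyr a b 0 = 0 := by
  rw [gyr_eq, add_zero, neg_add_cancel]

theorem gyr_neg (a b x : G) : gyr a b (-x) = -gyr a b x :=
  eq_neg_of_add_eq_zero_right (by rw [← gyr_add, add_neg_cancel, gyr_zero])

theorem neg_add_add_eq_gyr (a b c : G) : -(a + b) + (a + c) = gyr a b (-b + c) := by
  rw [← neg_add_cancel_left (a + b) (gyr a b (-b + c)), ← gyrassoc, add_neg_cancel_left]

theorem gyr_add_right_gyr (a b x : G) : gyr b (a + b) (gyr a b x) = x := by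
  have hb : -a + (a + b) = b := neg_add_cancel_left a b
  have hloop := loop (-a) (a + b)
  rw [hb] at hloop
  rw [hloop, gyr_eq (-a) (a + b), ← gyrassoc, hb, neg_add_cancel_left, neg_add_cancel_left]

theorem gyr_add_gyr_gyr (a b x : G) : gyr (b + a) (gyr b a b) (gyr b a x) = x := by
  calc gyr (b + a) (gyr b a b) (gyr b a x)
      = -(b + (a + b)) + (b + (a + (b + x))) := by
        rw [gyr_eq, ← gyr_add, ← gyrassoc b a b, ← gyrassoc b a (b + x)]
    _ = gyr b (a + b) (gyr a b x) := by rw [gyr_eq, ← gyrassoc a b x]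
    _ = x := gyr_add_right_gyr a b x

/-- With `p = a ⊖ (a ⊕ b)`, gyroassociativity writes both `a ⊟ b` and `a` as `p ⊕ (·)`, so
`⊖(a ⊟ b) ⊕ a` is a gyration of `b` that `gyr_add_gyr_gyr` undoes. -/
theorem boxminus_add_cancel (a b : G) : boxminus a b + b = a := by
  have hc : boxminus a b = (a + -(a + b)) + gyr a (-(a + b)) a := by
    rw [boxminus, gyr_eq, add_neg_cancel, add_zero, gyrassoc]
  have ha : (a + -(a + b)) + gyr a (-(a + b)) (a + b) = a := by
    rw [← gyrassoc, neg_add_cancel, add_zero]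
  have hb : -(boxminus a b) + a = b :=
    calc -(boxminus a b) + a
        = -((a + -(a + b)) + gyr a (-(a + b)) a)
            + ((a + -(a + b)) + gyr a (-(a + b)) (a + b)) := by rw [hc, ha]
      _ = b := by
        rw [neg_add_add_eq_gyr, ← gyr_neg, ← gyr_add, neg_add_cancel_left, gyr_add_gyr_gyr]
  calc boxminus a b + b = boxminus a b + (-(boxminus a b) + a) := by rw [hb]
    _ = a := add_neg_cancel_left _ _

end Gyrogroup

open Set Filter Topology

universe u

theorem exists_subcover_card_le_lindelofNumber {X ι : Type u} [TopologicalSpace X]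
    (t : ι → Set X) (ht : ∀ i, IsOpen (t i)) (hcov : ⋃ i, t i = univ) :
    ∃ s : Set ι, Cardinal.mk s ≤ LindelofNumber X ∧ ⋃ i ∈ s, t i = univ := by
  have hne : {κ : Cardinal | Cardinal.aleph0 ≤ κ ∧ ∀ C : Set (Set X), (∀ U ∈ C, IsOpen U) →
      ⋃₀ C = univ → ∃ D ⊆ C, Cardinal.mk D ≤ κ ∧ ⋃₀ D = univ}.Nonempty :=
    ⟨max Cardinal.aleph0 (Cardinal.mk (Set X)), le_max_left _ _, fun C _ hC =>
      ⟨C, subset_rfl, (Cardinal.mk_set_le C).trans (le_max_right _ _), hC⟩⟩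
  obtain ⟨-, hl⟩ := csInf_mem hne
  obtain ⟨D, hDt, hDcard, hDcov⟩ :=
    hl (range t) (forall_mem_range.2 ht) (by rwa [sUnion_range])
  choose f hf using fun d : D => hDt d.2
  refine ⟨range f, Cardinal.mk_range_le.trans hDcard, ?_⟩
  rw [biUnion_range, ← hDcov, sUnion_eq_iUnion]
  simp only [hf]

namespace Gyrogroup

variable {G : Type*} [Gyrogroup G] [TopologicalSpace G] [ContinuousAdd G]

theorem isOpenMap_add_left (x : G) : IsOpenMap (x + ·) := by
  intro V hV
  rw [image_eq_preimage_of_inverse (neg_add_cancel_left x) (add_neg_cancel_left x)]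
  exact hV.preimage (continuous_const_add (-x))

theorem exists_isOpen_disjoint_image2_boxminus [T2Space G] {x : G} (hx : x ≠ 0) :
    ∃ V, IsOpen V ∧ (0 : G) ∈ V ∧ Disjoint (image2 boxminus V V) ((x + ·) '' V) := by
  obtain ⟨u, v, hu, hv, hxu, h0v, huv⟩ := t2_separation hx
  have hxu' : (fun p : G × G => x + p.1 + p.2) (0, 0) ∈ u := by simpa only [add_zero]
  have hcont : Continuous fun p : G × G => x + p.1 + p.2 := by fun_prop
  have hW : (fun p : G × G => x + p.1 + p.2) ⁻¹' u ∈ 𝓝 (0 : G) ×ˢ 𝓝 0 := by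
    rw [← nhds_prod_eq]
    exact hcont.continuousAt.preimage_mem_nhds (hu.mem_nhds hxu')
  obtain ⟨W, hW, hWu⟩ := Filter.mem_prod_self_iff.mp hW
  refine ⟨interior (v ∩ W), isOpen_interior,
    mem_interior_iff_mem_nhds.mpr (inter_mem (hv.mem_nhds h0v) hW), ?_⟩
  rw [Set.disjoint_left]
  rintro _ ⟨a, ha, b, hb, rfl⟩ ⟨c, hc, hcab : x + c = boxminus a b⟩
  have hcbu : x + c + b ∈ u :=
    hWu (mk_mem_prod (interior_subset hc).2 (interior_subset hb).2)
  rw [hcab, boxminus_add_cancel] at hcbu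
  exact huv.ne_of_mem hcbu (interior_subset ha).1 rfl

theorem exists_isOpen_inter_image2_boxminus_subset [T2Space G] {U : Set G} (hU : U ∈ 𝓝 0)
    (x : G) : ∃ O V, IsOpen O ∧ x ∈ O ∧ V ∈ 𝓝 (0 : G) ∧ O ∩ image2 boxminus V V ⊆ U := by
  by_cases hx : x ∈ interior U
  · exact ⟨interior U, univ, isOpen_interior, hx, univ_mem,
      inter_subset_left.trans interior_subset⟩
  · have hx0 : x ≠ 0 := fun h => hx (h ▸ mem_interior_iff_mem_nhds.mpr hU)
    obtain ⟨V, hVo, hV0, hdisj⟩ := exists_isOpen_disjoint_image2_boxminus hx0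
    refine ⟨(x + ·) '' V, V, isOpenMap_add_left x V hVo, ⟨0, hV0, add_zero x⟩,
      hVo.mem_nhds hV0, ?_⟩
    rw [hdisj.symm.inter_eq]
    exact empty_subset U

end Gyrogroup

/-- For every Hausdorff paratopological gyrogroup G, Hs(G) ≤ l(G). -/
theorem Hs_le_lindelofNumber {G : Type*} [Gyrogroup G] [TopologicalSpace G]
    [ContinuousAdd G] [T2Space G] : Hs G ≤ LindelofNumber G := by
  refine csInf_le' fun U hU => ?_
  choose O V hO hxO hV hOV using Gyrogroup.exists_isOpen_inter_image2_boxminus_subset hU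
  obtain ⟨s, hs, hcov⟩ := exists_subcover_card_le_lindelofNumber O hO
    (eq_univ_of_forall fun x => mem_iUnion.2 ⟨x, hxO x⟩)
  refine ⟨V '' s, forall_mem_image.2 fun x _ => hV x, Cardinal.mk_image_le.trans hs,
    fun z hz => ?_⟩
  obtain ⟨x, hxs, hzx⟩ := mem_iUnion₂.1 (hcov ▸ mem_univ z)
  exact hOV x ⟨hzx, mem_iInter₂.1 hz _ (mem_image_of_mem V hxs)⟩
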